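/- arXiv:1612.00130 — 4 statements merged into one kernel-verified Lean document; each statement's English description precedes it below -/
import Mathlib

section
/- For a pair of finite random variables (X,Y) with X binary, the conditional entropy satisfies H(X|Y) ≥ Z(X|Y)², where Z is the Bhattacharyya parameter and entropy is measured in bits. -/
/-!
Write `a_y = p (false, y)`, `b_y = p (true, y)` and `s_y = a_y + b_y`. Splitting the joint
entropy over `y` gives `H(X|Y) = ∑_y s_y h(a_y / s_y)`, so the pointwise bound
`h(q) ≥ 4 q (1 - q)` (in bits) yields `H(X|Y) ≥ 4 ∑_y a_y b_y / s_y`, and Cauchy–Schwarz gives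
`∑_y a_y b_y / s_y ≥ (∑_y √(a_y b_y))²` because `∑_y s_y = 1`.

In the coordinate `u = 1 - 2q` the pointwise bound reads `F(u) ≤ F(1) u²` for
`F(u) = (1 + u) log (1 + u) + (1 - u) log (1 - u)`, which follows from the monotonicity of
`F(u) / u²` on `(0, 1]`. Its derivative has the sign of `u F'(u) - 2 F(u)`, a function vanishing
at `0` whose derivative is `2u / (1 - u²) - F'(u) ≥ 0`, as one sees by comparing the power series
of `F'(u) = log (1 + u) - log (1 - u)` with the geometric series termwise.
-/

open Real Set

noncomputable def symmMulLog (u : ℝ) : ℝ := (1 + u) * log (1 + u) + (1 - u) * log (1 - u)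

lemma continuous_symmMulLog : Continuous symmMulLog :=
  (continuous_mul_log.comp (continuous_const.add continuous_id)).add
    (continuous_mul_log.comp (continuous_const.sub continuous_id))

lemma symmMulLog_neg (u : ℝ) : symmMulLog (-u) = symmMulLog u := by
  simp only [symmMulLog, sub_neg_eq_add, ← sub_eq_add_neg]
  ring

lemma symmMulLog_one : symmMulLog 1 = 2 * log 2 := by
  norm_num [symmMulLog]

lemma binEntropy_eq_log_two_sub_symmMulLog (p : ℝ) :
    binEntropy p = log 2 - symmMulLog (1 - 2 * p) / 2 := by
  have hmul (x : ℝ) : 2 * x * log (2 * x) = 2 * x * log 2 - 2 * negMulLog x := by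
    have := negMulLog_mul 2 x
    simp only [negMulLog] at this ⊢
    linarith
  have h1 : 1 + (1 - 2 * p) = 2 * (1 - p) := by ring
  have h2 : 1 - (1 - 2 * p) = 2 * p := by ring
  rw [binEntropy_eq_negMulLog_add_negMulLog_one_sub, symmMulLog, h1, h2, hmul, hmul]
  ring

lemma hasDerivAt_symmMulLog {u : ℝ} (h1 : -1 < u) (h2 : u < 1) :
    HasDerivAt symmMulLog (log (1 + u) - log (1 - u)) u := by
  have hp := (hasDerivAt_mul_log (x := 1 + u) (by linarith)).comp u
    ((hasDerivAt_id' u).const_add 1)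
  have hm := (hasDerivAt_mul_log (x := 1 - u) (by linarith)).comp u
    ((hasDerivAt_id' u).const_sub 1)
  exact (hp.add hm).congr_deriv (by ring)

lemma hasDerivAt_log_one_add_sub_log_one_sub {u : ℝ} (h1 : -1 < u) (h2 : u < 1) :
    HasDerivAt (fun u => log (1 + u) - log (1 - u)) (2 / (1 - u ^ 2)) u := by
  have hp := ((hasDerivAt_id' u).const_add 1).log (by linarith)
  have hm := ((hasDerivAt_id' u).const_sub 1).log (by linarith)
  refine (hp.sub hm).congr_deriv ?_
  have : 1 + u ≠ 0 := by linarith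
  have : 1 - u ≠ 0 := by linarith
  have : 1 - u ^ 2 ≠ 0 := by nlinarith
  field_simp
  ring

lemma log_one_add_sub_log_one_sub_le {u : ℝ} (h0 : 0 ≤ u) (h1 : u < 1) :
    log (1 + u) - log (1 - u) ≤ 2 * u / (1 - u ^ 2) := by
  have hgeom : HasSum (fun k : ℕ => 2 * u * (u ^ 2) ^ k) (2 * u / (1 - u ^ 2)) := by
    simpa [div_eq_mul_inv] using
      (hasSum_geometric_of_lt_one (sq_nonneg u) (by nlinarith)).mul_left (2 * u)
  refine hasSum_le (fun k => ?_)
    (hasSum_log_sub_log_of_abs_lt_one (by rwa [abs_of_nonneg h0])) hgeom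
  rw [← pow_mul, mul_assoc 2 u, ← pow_succ']
  have hcoeff : 1 / (2 * (k : ℝ) + 1) ≤ 1 :=
    div_le_one_of_le₀ (by linarith [k.cast_nonneg (α := ℝ)]) (by positivity)
  have hpow := pow_nonneg h0 (2 * k + 1)
  nlinarith

lemma two_mul_symmMulLog_le {u : ℝ} (h0 : 0 ≤ u) (h1 : u < 1) :
    2 * symmMulLog u ≤ u * (log (1 + u) - log (1 - u)) := by
  set D := fun u => u * (log (1 + u) - log (1 - u)) - 2 * symmMulLog u
  have hD : ∀ x ∈ Ico (0 : ℝ) 1,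
      HasDerivAt D (x * (2 / (1 - x ^ 2)) - (log (1 + x) - log (1 - x))) x := by
    rintro x ⟨hx0, hx1⟩
    have := ((hasDerivAt_id' x).mul (hasDerivAt_log_one_add_sub_log_one_sub (by linarith) hx1)).sub
      ((hasDerivAt_symmMulLog (by linarith) hx1).const_mul 2)
    exact this.congr_deriv (by ring)
  have hmono : MonotoneOn D (Ico 0 1) := by
    refine monotoneOn_of_hasDerivWithinAt_nonneg (convex_Ico 0 1)
      (fun x hx => (hD x hx).continuousAt.continuousWithinAt)
      (fun x hx => (hD x (interior_subset hx)).hasDerivWithinAt) fun x hx => ?_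
    rw [interior_Ico] at hx
    have := log_one_add_sub_log_one_sub_le hx.1.le hx.2
    rw [mul_div_assoc', mul_comm x 2]
    linarith
  have hD0 : D 0 = 0 := by simp [D, symmMulLog]
  have := hmono ⟨le_rfl, one_pos⟩ ⟨h0, h1⟩ h0
  rw [hD0] at this
  exact sub_nonneg.1 this

lemma monotoneOn_symmMulLog_div_sq : MonotoneOn (fun u => symmMulLog u / u ^ 2) (Ioc 0 1) := by
  refine monotoneOn_of_hasDerivWithinAt_nonneg (convex_Ioc 0 1)
    (f' := fun u => (u * (log (1 + u) - log (1 - u)) - 2 * symmMulLog u) / u ^ 3)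
    (continuous_symmMulLog.continuousOn.div (continuous_pow 2).continuousOn
      fun x hx => pow_ne_zero 2 hx.1.ne') (fun x hx => ?_) fun x hx => ?_
  all_goals rw [interior_Ioc] at hx
  · refine ((hasDerivAt_symmMulLog (by linarith [hx.1]) hx.2).div (hasDerivAt_pow 2 x)
      (pow_ne_zero 2 hx.1.ne')).hasDerivWithinAt.congr_deriv ?_
    have := hx.1.ne'
    field_simp
    ring
  · exact div_nonneg (sub_nonneg.2 (two_mul_symmMulLog_le hx.1.le hx.2)) (pow_pos hx.1 3).le

lemma symmMulLog_le_of_abs_le_one {u : ℝ} (hu : |u| ≤ 1) :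
    symmMulLog u ≤ 2 * log 2 * u ^ 2 := by
  wlog h0 : 0 ≤ u generalizing u
  · simpa [symmMulLog_neg] using this (u := -u) (by rwa [abs_neg]) (by linarith)
  obtain rfl | hpos := h0.eq_or_lt
  · simp [symmMulLog]
  have h1 : u ≤ 1 := (abs_le.1 hu).2
  have := monotoneOn_symmMulLog_div_sq ⟨hpos, h1⟩ ⟨one_pos, le_rfl⟩ h1
  dsimp only at this
  rwa [symmMulLog_one, one_pow, div_one, div_le_iff₀ (by positivity)] at this

lemma four_mul_log_two_mul_le_binEntropy {p : ℝ} (h0 : 0 ≤ p) (h1 : p ≤ 1) :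
    4 * log 2 * (p * (1 - p)) ≤ binEntropy p := by
  have := symmMulLog_le_of_abs_le_one (u := 1 - 2 * p) (abs_le.2 ⟨by linarith, by linarith⟩)
  rw [binEntropy_eq_log_two_sub_symmMulLog]
  linarith

lemma negMulLog_add_negMulLog_sub_negMulLog_add {a b : ℝ} (hab : a + b ≠ 0) :
    negMulLog a + negMulLog b - negMulLog (a + b) = (a + b) * binEntropy (a / (a + b)) := by
  set s := a + b
  have ha : s * (a / s) = a := by field_simp
  have hb : s * (1 - a / s) = b := by field_simp; ring
  calc negMulLog a + negMulLog b - negMulLog s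
      = negMulLog (s * (a / s)) + negMulLog (s * (1 - a / s)) - negMulLog s := by rw [ha, hb]
    _ = s * binEntropy (a / s) := by
      rw [negMulLog_mul, negMulLog_mul, binEntropy_eq_negMulLog_add_negMulLog_one_sub]
      ring

lemma four_mul_log_two_mul_div_le_negMulLog {a b : ℝ} (ha : 0 ≤ a) (hb : 0 ≤ b) :
    4 * log 2 * (a * b / (a + b)) ≤ negMulLog a + negMulLog b - negMulLog (a + b) := by
  obtain hab | hab := (add_nonneg ha hb).eq_or_lt
  · obtain ⟨rfl, rfl⟩ := (add_eq_zero_iff_of_nonneg ha hb).1 hab.symm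
    simp
  have hq := four_mul_log_two_mul_le_binEntropy (div_nonneg ha hab.le)
    (div_le_one_of_le₀ (le_add_of_nonneg_right hb) hab.le)
  rw [negMulLog_add_negMulLog_sub_negMulLog_add hab.ne']
  calc 4 * log 2 * (a * b / (a + b))
      = (a + b) * (4 * log 2 * (a / (a + b) * (1 - a / (a + b)))) := by field_simp; ring
    _ ≤ (a + b) * binEntropy (a / (a + b)) := by gcongr

lemma sq_sum_sqrt_mul_le {ι : Type*} (s : Finset ι) {a b : ι → ℝ} (ha : ∀ i ∈ s, 0 ≤ a i)
    (hb : ∀ i ∈ s, 0 ≤ b i) :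
    (∑ i ∈ s, √(a i * b i)) ^ 2 ≤ (∑ i ∈ s, (a i + b i)) * ∑ i ∈ s, a i * b i / (a i + b i) := by
  refine Finset.sum_sq_le_sum_mul_sum_of_sq_le_mul s
    (fun i hi => add_nonneg (ha i hi) (hb i hi))
    (fun i hi => div_nonneg (mul_nonneg (ha i hi) (hb i hi)) (add_nonneg (ha i hi) (hb i hi)))
    fun i hi => ?_
  rw [sq_sqrt (mul_nonneg (ha i hi) (hb i hi))]
  obtain hab | hab := (add_nonneg (ha i hi) (hb i hi)).eq_or_lt
  · obtain ⟨h0, -⟩ := (add_eq_zero_iff_of_nonneg (ha i hi) (hb i hi)).1 hab.symm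
    simp [h0]
  · rw [mul_div_cancel₀ _ hab.ne']

/-- For a pair of finite random variables (X,Y) with X binary, the
conditional entropy (in bits) satisfies H(X|Y) ≥ Z(X|Y)², where
H(X|Y) = H(X,Y) − H(Y) and Z is the Bhattacharyya parameter. -/
theorem condEntropy_ge_bhattacharyya_sq {Y : Type*} [Fintype Y] (p : Bool × Y → ℝ)
    (hp : ∀ z, 0 ≤ p z) (hsum : ∑ z, p z = 1) :
    ((∑ z : Bool × Y, Real.negMulLog (p z)) - ∑ y, Real.negMulLog (∑ x, p (x, y))) /
        Real.log 2
      ≥ (2 * ∑ y, Real.sqrt (p (false, y) * p (true, y))) ^ 2 := by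
  have hcol (y : Y) : ∑ x, p (x, y) = p (false, y) + p (true, y) := by
    rw [Fintype.sum_bool, add_comm]
  have hmass : ∑ y, (p (false, y) + p (true, y)) = 1 := by
    simp only [← hcol, ← hsum, Fintype.sum_prod_type_right]
  have hentropy : (∑ z, negMulLog (p z)) - ∑ y, negMulLog (∑ x, p (x, y)) =
      ∑ y, (negMulLog (p (false, y)) + negMulLog (p (true, y))
        - negMulLog (p (false, y) + p (true, y))) := by
    rw [Fintype.sum_prod_type_right, ← Finset.sum_sub_distrib]
    refine Finset.sum_congr rfl fun y _ => ?_
    rw [hcol, Fintype.sum_bool, add_comm (negMulLog _)]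
  have hCS := sq_sum_sqrt_mul_le Finset.univ (fun y _ => hp (false, y)) fun y _ => hp (true, y)
  rw [hmass, one_mul] at hCS
  rw [ge_iff_le, hentropy, le_div_iff₀ (log_pos one_lt_two)]
  calc (2 * ∑ y, √(p (false, y) * p (true, y))) ^ 2 * log 2
      = 4 * log 2 * (∑ y, √(p (false, y) * p (true, y))) ^ 2 := by ring
    _ ≤ ∑ y, 4 * log 2 * (p (false, y) * p (true, y) / (p (false, y) + p (true, y))) := by
      rw [← Finset.mul_sum]
      gcongr
    _ ≤ _ := Finset.sum_le_sum fun y _ =>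
      four_mul_log_two_mul_div_le_negMulLog (hp (false, y)) (hp (true, y))
end

section
/- Conditioning on additional side information cannot increase the Bhattacharyya parameter: for random variables X (binary), Y, and W on finite alphabets, Z(X | Y, W) ≤ Z(X | Y). -/
/-! For each fixed `y`, the inequality is Cauchy–Schwarz for the vectors
`(√P(0, y, w))_w` and `(√P(1, y, w))_w`. -/

open Finset

lemma Real.sum_sqrt_mul_le_sqrt_sum_mul_sum {ι : Type*} (s : Finset ι) {f g : ι → ℝ}
    (hf : ∀ i, 0 ≤ f i) (hg : ∀ i, 0 ≤ g i) :
    ∑ i ∈ s, √(f i * g i) ≤ √((∑ i ∈ s, f i) * ∑ i ∈ s, g i) := by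
  simp only [Real.sqrt_mul (hf _), Real.sqrt_mul (sum_nonneg fun i _ => hf i)]
  exact Real.sum_sqrt_mul_sqrt_le s hf hg

theorem bhattacharyya_side_info_general {Y W : Type*} [Fintype Y] [Fintype W]
    (p : Bool × Y × W → ℝ) (hp : ∀ z, 0 ≤ p z) :
    2 * ∑ z : Y × W, Real.sqrt (p (false, z.1, z.2) * p (true, z.1, z.2))
      ≤ 2 * ∑ y, Real.sqrt ((∑ w, p (false, y, w)) * (∑ w, p (true, y, w))) := by
  rw [Fintype.sum_prod_type]
  gcongr with y
  exact Real.sum_sqrt_mul_le_sqrt_sum_mul_sum _ (fun _ => hp _) (fun _ => hp _)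

/-- Conditioning on additional side information cannot increase the
Bhattacharyya parameter: Z(X|Y,W) ≤ Z(X|Y), where Z(X|Y) is computed from the
marginal of the joint distribution p of (X,Y,W). -/
theorem bhattacharyya_side_info {Y W : Type*} [Fintype Y] [Fintype W]
    (p : Bool × Y × W → ℝ) (hp : ∀ z, 0 ≤ p z) (hsum : ∑ z, p z = 1) :
    2 * ∑ z : Y × W, Real.sqrt (p (false, z.1, z.2) * p (true, z.1, z.2))
      ≤ 2 * ∑ y, Real.sqrt ((∑ w, p (false, y, w)) * (∑ w, p (true, y, w))) :=
  bhattacharyya_side_info_general p hp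
end

section
/- If a channel P₂ : 𝒳 → 𝒴₂ is degraded with respect to P₁ : 𝒳 → 𝒴₁ (i.e., P₂ = P₃ ∘ P₁ for some channel P₃ : 𝒴₁ → 𝒴₂), then for any input distribution on X, Z(X|Y₁) ≤ Z(X|Y₂), where Yᵢ is the output of channel Pᵢ on input X. -/
/-!
Since each row `W i` of a stochastic matrix sums to one, `√(a b) = ∑_k √(a W i k) √(b W i k)`.
Exchanging the sums and applying Cauchy–Schwarz at each output `k` shows that the Bhattacharyya
coefficient `∑ √(a b)` of two nonnegative weights can only grow under the channel `W`; the
theorem is this with `W = P₃` and `a, b` the joint weights `pX x · P₁ x ·`.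
-/

section

open Finset

variable {ι κ : Type*} [Fintype ι] [Fintype κ]

noncomputable def bhattacharyyaCoeff (a b : ι → ℝ) : ℝ :=
  ∑ i, √(a i * b i)

lemma sqrt_mul_eq_sum_sqrt_mul_mul_sqrt_mul {a b : ℝ} (ha : 0 ≤ a) (hb : 0 ≤ b) {w : κ → ℝ}
    (hw : ∀ k, 0 ≤ w k) (hw1 : ∑ k, w k = 1) :
    √(a * b) = ∑ k, √(a * w k) * √(b * w k) := by
  have hterm : ∀ k, √(a * w k) * √(b * w k) = √(a * b) * w k := fun k => by
    rw [← Real.sqrt_mul (mul_nonneg ha (hw k)),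
      show a * w k * (b * w k) = a * b * (w k * w k) by ring,
      Real.sqrt_mul (mul_nonneg ha hb), Real.sqrt_mul_self (hw k)]
  simp only [hterm, ← mul_sum, hw1, mul_one]

theorem bhattacharyyaCoeff_le_comp {a b : ι → ℝ} (ha : ∀ i, 0 ≤ a i) (hb : ∀ i, 0 ≤ b i)
    {W : ι → κ → ℝ} (hW : ∀ i, (∀ k, 0 ≤ W i k) ∧ ∑ k, W i k = 1) :
    bhattacharyyaCoeff a b ≤
      bhattacharyyaCoeff (fun k => ∑ i, a i * W i k) (fun k => ∑ i, b i * W i k) := by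
  have haW : ∀ i k, 0 ≤ a i * W i k := fun i k => mul_nonneg (ha i) ((hW i).1 k)
  have hbW : ∀ i k, 0 ≤ b i * W i k := fun i k => mul_nonneg (hb i) ((hW i).1 k)
  calc ∑ i, √(a i * b i)
      = ∑ i, ∑ k, √(a i * W i k) * √(b i * W i k) :=
        sum_congr rfl fun i _ =>
          sqrt_mul_eq_sum_sqrt_mul_mul_sqrt_mul (ha i) (hb i) (hW i).1 (hW i).2
    _ = ∑ k, ∑ i, √(a i * W i k) * √(b i * W i k) := sum_comm
    _ ≤ ∑ k, √((∑ i, a i * W i k) * ∑ i, b i * W i k) :=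
        sum_le_sum fun k _ => by
          rw [Real.sqrt_mul (sum_nonneg fun i _ => haW i k)]
          exact Real.sum_sqrt_mul_sqrt_le _ (fun i => haW i k) (fun i => hbW i k)

end

theorem bhattacharyya_degraded_general {Y1 Y2 : Type*} [Fintype Y1] [Fintype Y2]
    (P1 : Bool → Y1 → ℝ) (P2 : Bool → Y2 → ℝ)
    (h1 : ∀ x, (∀ y, 0 ≤ P1 x y) ∧ ∑ y, P1 x y = 1)
    (hdeg : ∃ P3 : Y1 → Y2 → ℝ,
      (∀ y1, (∀ y2, 0 ≤ P3 y1 y2) ∧ ∑ y2, P3 y1 y2 = 1) ∧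
      ∀ x y2, P2 x y2 = ∑ y1, P1 x y1 * P3 y1 y2)
    (pX : Bool → ℝ) (hpX : ∀ x, 0 ≤ pX x) :
    2 * ∑ y1, Real.sqrt ((pX false * P1 false y1) * (pX true * P1 true y1))
      ≤ 2 * ∑ y2, Real.sqrt ((pX false * P2 false y2) * (pX true * P2 true y2)) := by
  obtain ⟨P3, hP3, hcomp⟩ := hdeg
  have hjoint : ∀ x y2, pX x * P2 x y2 = ∑ y1, pX x * P1 x y1 * P3 y1 y2 := fun x y2 => by
    simp only [hcomp, Finset.mul_sum, mul_assoc]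
  have hle := bhattacharyyaCoeff_le_comp (fun y1 => mul_nonneg (hpX false) ((h1 false).1 y1))
    (fun y1 => mul_nonneg (hpX true) ((h1 true).1 y1)) hP3
  simp only [bhattacharyyaCoeff, ← hjoint] at hle
  linarith

/-- If channel P₂ : {0,1} → 𝒴₂ is degraded with respect to
P₁ : {0,1} → 𝒴₁ (i.e. P₂ = P₃ ∘ P₁ for some channel P₃), then for any input
distribution pX, Z(X|Y₁) ≤ Z(X|Y₂), where Yᵢ is the output of Pᵢ on input X and
Z is the Bhattacharyya parameter of the joint law pX(x)·Pᵢ(y|x). -/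
theorem bhattacharyya_degraded {Y1 Y2 : Type*} [Fintype Y1] [Fintype Y2]
    (P1 : Bool → Y1 → ℝ) (P2 : Bool → Y2 → ℝ)
    (h1 : ∀ x, (∀ y, 0 ≤ P1 x y) ∧ ∑ y, P1 x y = 1)
    (h2 : ∀ x, (∀ y, 0 ≤ P2 x y) ∧ ∑ y, P2 x y = 1)
    (hdeg : ∃ P3 : Y1 → Y2 → ℝ,
      (∀ y1, (∀ y2, 0 ≤ P3 y1 y2) ∧ ∑ y2, P3 y1 y2 = 1) ∧
      ∀ x y2, P2 x y2 = ∑ y1, P1 x y1 * P3 y1 y2)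
    (pX : Bool → ℝ) (hpX : ∀ x, 0 ≤ pX x) (hpX1 : ∑ x, pX x = 1) :
    2 * ∑ y1, Real.sqrt ((pX false * P1 false y1) * (pX true * P1 true y1))
      ≤ 2 * ∑ y2, Real.sqrt ((pX false * P2 false y2) * (pX true * P2 true y2)) :=
  bhattacharyya_degraded_general P1 P2 h1 hdeg pX hpX
end

section
/- For the single-step polar transform of a binary erasure channel, the Bhattacharyya parameters satisfy Z⁻ = 2Z − Z² and Z⁺ = Z²: if X₁, X₂ are i.i.d. uniform bits observed through independent BEC(ε) outputs Y₁, Y₂, and U₁ = X₁ ⊕ X₂, U₂ = X₂, then Z(U₁ | Y₁,Y₂) = 2ε − ε² and Z(U₂ | Y₁,Y₂,U₁) = ε². -/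
/-- The binary erasure channel BEC(ε): input x is received with probability 1-ε
and erased (output `none`) with probability ε. -/
noncomputable def bec (ε : ℝ) : Bool → Option Bool → ℝ := fun x y =>
  match y with
  | some b => if b = x then 1 - ε else 0
  | none => ε

/-!
On the outputs where the input bit cannot be decoded, the two joint probabilities
`P false y` and `P true y` agree, and elsewhere one of them vanishes; so the Bhattacharyya
parameter of such an erasure-type law is the probability of the undecodable outputs.
For `U₁` these are the outputs with at least one erasure, of probability `1 - (1 - ε)²`;
for `U₂`, given `U₁`, only the outputs with both symbols erased, of probability `ε²`.
-/

/-- `P u y` is the joint law of a uniform bit `u` and an observation `y`, i.e. `W(y|u) / 2`,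
so this is the usual `∑ y, √(W(y|0) W(y|1))`. -/
noncomputable def bhattacharyya {β : Type*} [Fintype β] (P : Bool → β → ℝ) : ℝ :=
  2 * ∑ y, √(P false y * P true y)

theorem bhattacharyya_eq_sum_filter {β : Type*} [Fintype β] (P : Bool → β → ℝ)
    (E : β → Prop) [DecidablePred E] (hP : ∀ u y, 0 ≤ P u y)
    (h_erased : ∀ y, E y → P false y = P true y)
    (h_decoded : ∀ y, ¬E y → P false y * P true y = 0) :
    bhattacharyya P = ∑ y with E y, (P false y + P true y) := by
  rw [bhattacharyya, Finset.sum_filter, Finset.mul_sum]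
  refine Finset.sum_congr rfl fun y _ => ?_
  split_ifs with hy
  · rw [← h_erased y hy, Real.sqrt_mul_self (hP _ _)]
    ring
  · rw [h_decoded y hy, Real.sqrt_zero, mul_zero]

theorem bec_nonneg {ε : ℝ} (h0 : 0 ≤ ε) (h1 : ε ≤ 1) (x : Bool) (y : Option Bool) :
    0 ≤ bec ε x y := by
  rcases y with _ | b
  · exact h0
  · simp only [bec]
    split_ifs <;> linarith

/-- The joint law of `U₁ = X₁ ⊕ X₂` and `(Y₁, Y₂)`. -/
noncomputable def minusLaw (ε : ℝ) (u : Bool) (y : Option Bool × Option Bool) : ℝ :=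
  ∑ x₂ : Bool, (1/4 : ℝ) * bec ε (xor u x₂) y.1 * bec ε x₂ y.2

/-- The joint law of `U₂ = X₂` and `((Y₁, Y₂), U₁)`. -/
noncomputable def plusLaw (ε : ℝ) (u : Bool) (z : (Option Bool × Option Bool) × Bool) : ℝ :=
  (1/4 : ℝ) * bec ε (xor z.2 u) z.1.1 * bec ε u z.1.2

theorem bhattacharyya_minusLaw {ε : ℝ} (h0 : 0 ≤ ε) (h1 : ε ≤ 1) :
    bhattacharyya (minusLaw ε) = 2 * ε - ε ^ 2 := by
  have hbec := bec_nonneg h0 h1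
  rw [bhattacharyya_eq_sum_filter _ (fun y => y.1 = none ∨ y.2 = none)]
  · simp [Finset.sum_filter, Fintype.sum_prod_type, minusLaw, bec]
    ring
  case hP =>
    intro u y
    refine Finset.sum_nonneg fun x₂ _ => ?_
    have := hbec (xor u x₂) y.1
    have := hbec x₂ y.2
    positivity
  all_goals
    rintro ⟨_ | a, _ | b⟩ hy <;> (try cases a) <;> (try cases b) <;> simp_all [minusLaw, bec]

theorem bhattacharyya_plusLaw {ε : ℝ} (h0 : 0 ≤ ε) (h1 : ε ≤ 1) :
    bhattacharyya (plusLaw ε) = ε ^ 2 := by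
  have hbec := bec_nonneg h0 h1
  rw [bhattacharyya_eq_sum_filter _ (fun z => z.1.1 = none ∧ z.1.2 = none)]
  · simp [Finset.sum_filter, Fintype.sum_prod_type, plusLaw, bec]
    ring
  case hP =>
    intro u z
    have := hbec (xor z.2 u) z.1.1
    have := hbec u z.1.2
    unfold plusLaw
    positivity
  all_goals
    rintro ⟨⟨_ | a, _ | b⟩, u₁⟩ hy <;> (try cases a) <;> (try cases b) <;> cases u₁ <;>
      simp_all [plusLaw, bec]

/-- Single-step polar transform of a BEC(ε) with i.i.d. uniform
inputs X₁,X₂, U₁ = X₁ ⊕ X₂, U₂ = X₂: Z(U₁|Y₁,Y₂) = 2ε − ε² and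
Z(U₂|Y₁,Y₂,U₁) = ε², with Z the Bhattacharyya parameter of the joint laws
q(u₁,(y₁,y₂)) = ∑_{x₂} (1/4)·bec(ε)(u₁⊕x₂)(y₁)·bec(ε)(x₂)(y₂) and
r(u₂,((y₁,y₂),u₁)) = (1/4)·bec(ε)(u₁⊕u₂)(y₁)·bec(ε)(u₂)(y₂). -/
theorem polar_transform_bec (ε : ℝ) (h0 : 0 ≤ ε) (h1 : ε ≤ 1) :
    (2 * ∑ y : Option Bool × Option Bool,
        Real.sqrt ((∑ x2 : Bool, (1/4 : ℝ) * bec ε (xor false x2) y.1 * bec ε x2 y.2) *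
          (∑ x2 : Bool, (1/4 : ℝ) * bec ε (xor true x2) y.1 * bec ε x2 y.2))
      = 2 * ε - ε ^ 2) ∧
    (2 * ∑ z : (Option Bool × Option Bool) × Bool,
        Real.sqrt (((1/4 : ℝ) * bec ε (xor z.2 false) z.1.1 * bec ε false z.1.2) *
          ((1/4 : ℝ) * bec ε (xor z.2 true) z.1.1 * bec ε true z.1.2))
      = ε ^ 2) :=
  ⟨bhattacharyya_minusLaw h0 h1, bhattacharyya_plusLaw h0 h1⟩
end
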